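/- arXiv:0906.1167 — 4 statements merged into one kernel-verified Lean document; each statement's English description precedes it below -/
import Mathlib

section
/- Let λ(x) = Σ_{i<j}[log sin(x_i−x_j) + log sin(x_i+x_j)] + Σ_i [β log sin x_i + β' log cos x_i] with β, β' > 0, defined on the open set C = {x ∈ ℝ^N : 0 < x_1 < ⋯ < x_N < π/2}. Then the Hessian matrix D²λ(x) is negative definite at every point x ∈ C. -/
/-!
Writing `a i j = sin⁻² (x i - x j)` and `b i j = sin⁻² (x i + x j)`, the matrix `-D²λ` has
diagonal entries `β sin⁻² x i + β' cos⁻² x i + ∑_{k ≠ i} (a i k + b i k)` and off-diagonal entries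
`a i j - b i j`. Since `|a - b| ≤ a + b` for `a, b ≥ 0`, the symmetric matrix `-D²λ` is strictly
diagonally dominant with positive diagonal, so by Gershgorin's circle theorem all of its
eigenvalues are positive.
-/

open Real

open scoped ComplexOrder in
theorem Matrix.IsHermitian.posDef_of_sum_norm_lt_re_diag {𝕜 n : Type*} [RCLike 𝕜] [Fintype n]
    [DecidableEq n] {A : Matrix n n 𝕜} (hA : A.IsHermitian)
    (h : ∀ k, ∑ j ∈ Finset.univ.erase k, ‖A k j‖ < RCLike.re (A k k)) : A.PosDef := by
  refine hA.posDef_iff_eigenvalues_pos.mpr fun i => ?_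
  have hμ : Module.End.HasEigenvalue (Matrix.toLin' A) (hA.eigenvalues i : 𝕜) := by
    refine Module.End.hasEigenvalue_of_hasEigenvector
      (x := (hA.eigenvectorBasis i).ofLp) ⟨?_, ?_⟩
    · rw [Module.End.mem_eigenspace_iff, Matrix.toLin'_apply, hA.mulVec_eigenvectorBasis,
        RCLike.real_smul_eq_coe_smul (K := 𝕜)]
    · simpa using hA.eigenvectorBasis.orthonormal.ne_zero i
  obtain ⟨k, hk⟩ := eigenvalue_mem_ball hμ
  rw [mem_closedBall_iff_norm] at hk
  have hre := RCLike.re_le_norm (A k k - (hA.eigenvalues i : 𝕜))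
  rw [map_sub, RCLike.ofReal_re, norm_sub_rev] at hre
  linarith [h k]

theorem Matrix.posDef_diagonal_add_signlessLaplacian_add_laplacian {n : Type*} [Fintype n]
    [DecidableEq n] (c : n → ℝ) (a b : n → n → ℝ) (hc : ∀ i, 0 < c i)
    (ha : ∀ i j, 0 ≤ a i j) (hb : ∀ i j, 0 ≤ b i j)
    (ha_symm : ∀ i j, a i j = a j i) (hb_symm : ∀ i j, b i j = b j i) :
    (Matrix.of fun i j => if i = j then c i + ∑ k ∈ Finset.univ \ {i}, (a i k + b i k)
      else a i j - b i j).PosDef := by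
  set M : Matrix n n ℝ := Matrix.of fun i j =>
    if i = j then c i + ∑ k ∈ Finset.univ \ {i}, (a i k + b i k) else a i j - b i j
  refine Matrix.IsHermitian.posDef_of_sum_norm_lt_re_diag ?_ fun k => ?_
  · ext i j
    by_cases hij : i = j
    · simp [M, hij]
    · simp [M, hij, Ne.symm hij, ha_symm i j, hb_symm i j]
  · calc ∑ j ∈ Finset.univ.erase k, ‖M k j‖
        = ∑ j ∈ Finset.univ.erase k, |a k j - b k j| :=
          Finset.sum_congr rfl fun j hj => by simp [M, (Finset.ne_of_mem_erase hj).symm]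
      _ ≤ ∑ j ∈ Finset.univ.erase k, (a k j + b k j) :=
          Finset.sum_le_sum fun j _ =>
            abs_le.mpr ⟨by linarith [ha k j, hb k j], by linarith [ha k j, hb k j]⟩
      _ < c k + ∑ j ∈ Finset.univ \ {k}, (a k j + b k j) := by
          rw [Finset.sdiff_singleton_eq_erase]; linarith [hc k]
      _ = RCLike.re (M k k) := by simp [M]

theorem sq_inv_sin_sub_comm (u v : ℝ) : (sin (u - v))⁻¹ ^ 2 = (sin (v - u))⁻¹ ^ 2 := by
  rw [← neg_sub, sin_neg, inv_neg, neg_sq]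

theorem hessian_negDef_general (N : ℕ) (β β' : ℝ) (hβ : 0 < β) (hβ' : 0 < β')
    (x : Fin N → ℝ)
    (hx : ∀ i, 0 < x i ∧ x i < π / 2) :
    Matrix.PosDef (-(Matrix.of fun i j : Fin N =>
      if i = j then
        -(∑ k ∈ Finset.univ \ {i},
            ((Real.sin (x i - x k))⁻¹ ^ 2 + (Real.sin (x i + x k))⁻¹ ^ 2))
          - β * (Real.sin (x i))⁻¹ ^ 2 - β' * (Real.cos (x i))⁻¹ ^ 2
      else -(Real.sin (x i - x j))⁻¹ ^ 2 + (Real.sin (x i + x j))⁻¹ ^ 2)) := by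
  have hsin : ∀ i, sin (x i) ≠ 0 := fun i =>
    (sin_pos_of_pos_of_lt_pi (hx i).1 (by linarith [(hx i).2, pi_pos])).ne'
  convert Matrix.posDef_diagonal_add_signlessLaplacian_add_laplacian
    (fun i => β * (sin (x i))⁻¹ ^ 2 + β' * (cos (x i))⁻¹ ^ 2)
    (fun i j => (sin (x i - x j))⁻¹ ^ 2) (fun i j => (sin (x i + x j))⁻¹ ^ 2)
    (fun i => by have := hsin i; positivity) (fun _ _ => sq_nonneg _) (fun _ _ => sq_nonneg _)
    (fun _ _ => sq_inv_sin_sub_comm _ _) (fun _ _ => by rw [add_comm]) using 1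
  ext i j
  by_cases hij : i = j <;> simp [hij] <;> ring

/-- The Hessian of the function `λ(x) = Σ_{i<j}[log sin(x_i−x_j) + log sin(x_i+x_j)]
+ Σ_i [β log sin x_i + β' log cos x_i]`, with entries as computed in the paper, is
negative definite at every point of the Weyl alcove `C` (i.e. its negation is
positive definite). -/
theorem hessian_negDef (N : ℕ) (β β' : ℝ) (hβ : 0 < β) (hβ' : 0 < β')
    (x : Fin N → ℝ) (hmono : StrictMono x)
    (hx : ∀ i, 0 < x i ∧ x i < π / 2) :
    Matrix.PosDef (-(Matrix.of fun i j : Fin N =>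
      if i = j then
        -(∑ k ∈ Finset.univ \ {i},
            ((Real.sin (x i - x k))⁻¹ ^ 2 + (Real.sin (x i + x k))⁻¹ ^ 2))
          - β * (Real.sin (x i))⁻¹ ^ 2 - β' * (Real.cos (x i))⁻¹ ^ 2
      else -(Real.sin (x i - x j))⁻¹ ^ 2 + (Real.sin (x i + x j))⁻¹ ^ 2)) :=
  hessian_negDef_general N β β' hβ hβ' x hx
end

section
/- Let λ(x) = Σ_{i<j}[log sin(x_i−x_j) + log sin(x_i+x_j)] + Σ_i [β log sin x_i + β' log cos x_i] with β, β' > 0 on C = {x : 0 < x_1 < ⋯ < x_N < π/2}. Then λ attains its maximum at a unique point ξ ∈ C, which is the unique critical point of λ in C. -/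
open Real

/-- The function `λ` of the trigonometric BC_N model. -/
noncomputable def lamBC (N : ℕ) (β β' : ℝ) (x : Fin N → ℝ) : ℝ :=
  (∑ i, ∑ j ∈ Finset.Ioi i,
      (Real.log (Real.sin (x i - x j)) + Real.log (Real.sin (x i + x j))))
    + ∑ i, (β * Real.log (Real.sin (x i)) + β' * Real.log (Real.cos (x i)))

/-- The Weyl alcove `C = {0 < x₁ < ⋯ < x_N < π/2}`. -/
def weylAlcove (N : ℕ) : Set (Fin N → ℝ) :=
  {x | StrictMono x ∧ ∀ i, 0 < x i ∧ x i < π / 2}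

/-!
Each of `log sin` and `log cos` is strictly concave where positive, so `λ` is strictly concave on
the convex open alcove `C`; the single-coordinate part `∑ β log sin xᵢ + β' log cos xᵢ` already
makes it strict. Since every term of `λ` is `≤ 0`, on a superlevel set `{λ ≥ m}` each factor
`sin (xⱼ - xᵢ)`, `sin xᵢ`, `cos xᵢ` is bounded below by some `δ > 0`, and `sin t ≤ t` turns this
into a distance `δ` from the walls of `C`. That superlevel set thus lies in a compact subset of `C`,
so `λ` attains its maximum; strict concavity makes the maximiser unique and every critical point a
maximiser.
-/

open Set

section Concavity

variable {E : Type*} [AddCommGroup E] [Module ℝ E] {s : Set E}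

lemma StrictConcaveOn.const_mul {f : E → ℝ} {c : ℝ} (hf : StrictConcaveOn ℝ s f) (hc : 0 < c) :
    StrictConcaveOn ℝ s fun x => c * f x := by
  refine ⟨hf.1, fun x hx y hy hxy a b ha hb hab => ?_⟩
  have := mul_lt_mul_of_pos_left (hf.2 hx hy hxy ha hb hab) hc
  simp only [smul_eq_mul] at this ⊢
  linarith

lemma StrictConcaveOn.log_comp {f : E → ℝ} (hf : StrictConcaveOn ℝ s f)
    (hpos : ∀ x ∈ s, 0 < f x) : StrictConcaveOn ℝ s fun x => log (f x) := by
  refine ⟨hf.1, fun x hx y hy hxy a b ha hb hab => ?_⟩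
  have hcomb := hf.2 hx hy hxy ha hb hab
  calc a • log (f x) + b • log (f y) ≤ log (a • f x + b • f y) :=
        strictConcaveOn_log_Ioi.concaveOn.2 (hpos x hx) (hpos y hy) ha.le hb.le hab
    _ < log (f (a • x + b • y)) := by
        refine log_lt_log ?_ hcomb
        have := hpos x hx; have := hpos y hy
        simp only [smul_eq_mul]; positivity

lemma ConcaveOn.fun_sum {ι : Type*} (t : Finset ι) {f : ι → E → ℝ} (hs : Convex ℝ s)
    (hf : ∀ i ∈ t, ConcaveOn ℝ s (f i)) : ConcaveOn ℝ s fun x => ∑ i ∈ t, f i x := by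
  simpa only [Finset.sum_fn] using
    Finset.sum_induction f (ConcaveOn ℝ s) (fun _ _ => ConcaveOn.add) (concaveOn_const 0 hs) hf

lemma strictConcaveOn_sum_comp_apply {ι : Type*} [Fintype ι] {I : Set ℝ} {φ : ℝ → ℝ}
    (hφ : StrictConcaveOn ℝ I φ) :
    StrictConcaveOn ℝ (univ.pi fun _ : ι => I) fun x => ∑ i, φ (x i) := by
  refine ⟨convex_pi fun _ _ => hφ.1, fun x hx y hy hxy a b ha hb hab => ?_⟩
  obtain ⟨i₀, hi₀⟩ := Function.ne_iff.1 hxy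
  simp only [smul_eq_mul, Finset.mul_sum, ← Finset.sum_add_distrib, Pi.add_apply, Pi.smul_apply]
  refine Finset.sum_lt_sum (fun i _ => ?_) ⟨i₀, Finset.mem_univ _, ?_⟩
  · simpa only [smul_eq_mul] using hφ.concaveOn.2 (hx i trivial) (hy i trivial) ha.le hb.le hab
  · simpa only [smul_eq_mul] using hφ.2 (hx i₀ trivial) (hy i₀ trivial) hi₀ ha hb hab

end Concavity

theorem ConcaveOn.isMaxOn_of_fderiv_eq_zero {E : Type*} [NormedAddCommGroup E] [NormedSpace ℝ E]
    {s : Set E} {f : E → ℝ} {a : E} (hf : ConcaveOn ℝ s f) (ha : a ∈ s)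
    (hd : DifferentiableAt ℝ f a) (h : fderiv ℝ f a = 0) : IsMaxOn f s a := by
  refine isMaxOn_iff.2 fun z hz => ?_
  have hg : ConcaveOn ℝ (Icc (0 : ℝ) 1) (f ∘ AffineMap.lineMap a z) :=
    (hf.comp_affineMap _).subset (fun _ ht => hf.1.lineMap_mem ha hz ht) (convex_Icc 0 1)
  have hg' : HasDerivAt (f ∘ AffineMap.lineMap a z) 0 (0 : ℝ) := by
    simpa [h] using hd.hasFDerivAt.comp_hasDerivAt_of_eq (0 : ℝ) AffineMap.hasDerivAt_lineMap
      (AffineMap.lineMap_apply_zero a z).symm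
  simpa [slope] using hg.slope_le_of_hasDerivAt (left_mem_Icc.2 zero_le_one)
    (right_mem_Icc.2 zero_le_one) zero_lt_one hg'

theorem exists_isMaxOn_of_superlevel_subset {X β : Type*} [TopologicalSpace X] [LinearOrder β]
    [TopologicalSpace β] [OrderClosedTopology β] {f : X → β} {C K : Set X} (hK : IsCompact K)
    (hKC : K ⊆ C) (hf : ContinuousOn f C) {x₀ : X} (hx₀ : x₀ ∈ C)
    (hsub : ∀ x ∈ C, f x₀ ≤ f x → x ∈ K) : ∃ ξ ∈ C, IsMaxOn f C ξ := by
  obtain ⟨ξ, hξK, hξ⟩ := hK.exists_isMaxOn ⟨x₀, hsub x₀ hx₀ le_rfl⟩ (hf.mono hKC)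
  refine ⟨ξ, hKC hξK, isMaxOn_iff.2 fun x hx => ?_⟩
  rcases le_total (f x₀) (f x) with h | h
  · exact hξ (hsub x hx h)
  · exact h.trans (hξ (hsub x₀ hx₀ le_rfl))

lemma log_sin_nonpos (t : ℝ) : log (sin t) ≤ 0 := by
  rw [← log_abs]
  exact log_nonpos (abs_nonneg _) (abs_le.2 ⟨neg_one_le_sin t, sin_le_one t⟩)

lemma log_cos_nonpos (t : ℝ) : log (cos t) ≤ 0 := by
  rw [← log_abs]
  exact log_nonpos (abs_nonneg _) (abs_le.2 ⟨neg_one_le_cos t, cos_le_one t⟩)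

lemma exp_div_le_of_le_mul_log {m c y : ℝ} (hc : 0 < c) (hy : 0 < y) (h : m ≤ c * log y) :
    exp (m / c) ≤ y := by
  rwa [← le_log_iff_exp_le hy, div_le_iff₀' hc]

lemma Finset.sum_le_of_nonpos {ι : Type*} {s : Finset ι} {f : ι → ℝ} {i : ι} (hi : i ∈ s)
    (hf : ∀ j ∈ s, f j ≤ 0) : ∑ j ∈ s, f j ≤ f i := by
  simpa using Finset.single_le_sum (f := fun j => -f j) (fun j hj => neg_nonneg.2 (hf j hj)) hi

lemma strictConcaveOn_log_sin : StrictConcaveOn ℝ (Ioo 0 π) fun t => log (sin t) :=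
  (strictConcaveOn_sin_Icc.subset Ioo_subset_Icc_self (convex_Ioo 0 π)).log_comp
    fun _ => sin_pos_of_mem_Ioo

lemma strictConcaveOn_log_cos : StrictConcaveOn ℝ (Ioo (-(π / 2)) (π / 2)) fun t => log (cos t) :=
  (strictConcaveOn_cos_Icc.subset Ioo_subset_Icc_self (convex_Ioo _ _)).log_comp
    fun _ => cos_pos_of_mem_Ioo

lemma concaveOn_log_sin_comp_linearMap {E : Type*} [AddCommGroup E] [Module ℝ E] {s : Set E}
    (hs : Convex ℝ s) (ℓ : E →ₗ[ℝ] ℝ) (hℓ : ∀ x ∈ s, ℓ x ∈ Ioo 0 π) :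
    ConcaveOn ℝ s fun x => log (sin (ℓ x)) :=
  (strictConcaveOn_log_sin.concaveOn.comp_linearMap ℓ).subset hℓ hs

namespace WeylAlcove

variable {N : ℕ} {x : Fin N → ℝ}

lemma pos (hx : x ∈ weylAlcove N) (i : Fin N) : 0 < x i := (hx.2 i).1

lemma lt_pi_div_two (hx : x ∈ weylAlcove N) (i : Fin N) : x i < π / 2 := (hx.2 i).2

lemma sin_pos (hx : x ∈ weylAlcove N) (i : Fin N) : 0 < sin (x i) :=
  sin_pos_of_pos_of_lt_pi (pos hx i) (by linarith [lt_pi_div_two hx i, pi_pos])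

lemma cos_pos (hx : x ∈ weylAlcove N) (i : Fin N) : 0 < cos (x i) :=
  cos_pos_of_mem_Ioo ⟨by linarith [pos hx i, pi_pos], lt_pi_div_two hx i⟩

lemma sub_mem_Ioo (hx : x ∈ weylAlcove N) {i j : Fin N} (hij : i < j) :
    x j - x i ∈ Ioo 0 π :=
  ⟨sub_pos.2 (hx.1 hij), by linarith [pos hx i, lt_pi_div_two hx j, pi_pos]⟩

lemma add_mem_Ioo (hx : x ∈ weylAlcove N) (i j : Fin N) : x i + x j ∈ Ioo 0 π :=
  ⟨by linarith [pos hx i, pos hx j], by linarith [lt_pi_div_two hx i, lt_pi_div_two hx j]⟩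

end WeylAlcove

lemma weylAlcove_subset_pi (N : ℕ) : weylAlcove N ⊆ univ.pi fun _ => Ioo 0 (π / 2) :=
  fun _ hx i _ => hx.2 i

lemma convex_weylAlcove (N : ℕ) : Convex ℝ (weylAlcove N) := by
  rintro x ⟨hx, hxb⟩ y ⟨hy, hyb⟩ a b ha hb hab
  refine ⟨fun i j hij => ?_, fun i => convex_Ioo 0 (π / 2) (hxb i) (hyb i) ha hb hab⟩
  have := convex_Ioi (0 : ℝ) (sub_pos.2 (hx hij)) (sub_pos.2 (hy hij)) ha hb hab
  simp only [mem_Ioi, smul_eq_mul, Pi.add_apply, Pi.smul_apply] at this ⊢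
  linarith

lemma isOpen_weylAlcove (N : ℕ) : IsOpen (weylAlcove N) := by
  simp only [weylAlcove, StrictMono, ofPred_and, ofPred_forall]
  refine .inter (isOpen_iInter_of_finite fun i => isOpen_iInter_of_finite fun j =>
    isOpen_iInter_of_finite fun _ => isOpen_lt (continuous_apply i) (continuous_apply j))
    (isOpen_iInter_of_finite fun i => .inter (isOpen_lt continuous_const (continuous_apply i))
      (isOpen_lt (continuous_apply i) continuous_const))

lemma weylAlcove_nonempty (N : ℕ) : (weylAlcove N).Nonempty := by
  have hc : 0 < π / 2 / (N + 1) := by positivity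
  refine ⟨fun i => ((i : ℕ) + 1) * (π / 2 / (N + 1)), fun i j hij => ?_, fun i => ⟨by positivity, ?_⟩⟩
  · dsimp only
    gcongr
    exact hij
  · calc ((i : ℕ) + 1) * (π / 2 / (N + 1)) < (N + 1) * (π / 2 / (N + 1)) := by
          gcongr; exact_mod_cast i.isLt
      _ = π / 2 := by field_simp

section LamBC

variable {N : ℕ} {β β' : ℝ}

lemma lamBC_eq_sum_log_sin_rev_sub (N : ℕ) (β β' : ℝ) : lamBC N β β' = fun x =>
    (∑ i, ∑ j ∈ Finset.Ioi i, (log (sin (x j - x i)) + log (sin (x i + x j))))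
      + ∑ i, (β * log (sin (x i)) + β' * log (cos (x i))) := by
  funext x
  rw [lamBC]
  congr 1
  refine Finset.sum_congr rfl fun i _ => Finset.sum_congr rfl fun j _ => ?_
  rw [← neg_sub, sin_neg, log_neg_eq_log]

lemma lamBC_le_log_sin_sub (hβ : 0 ≤ β) (hβ' : 0 ≤ β') (x : Fin N → ℝ) {i j : Fin N}
    (hij : i < j) : lamBC N β β' x ≤ log (sin (x j - x i)) := by
  have hsingle : ∑ k, (β * log (sin (x k)) + β' * log (cos (x k))) ≤ 0 :=
    Finset.sum_nonpos fun k _ => add_nonpos (mul_nonpos_of_nonneg_of_nonpos hβ (log_sin_nonpos _))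
      (mul_nonpos_of_nonneg_of_nonpos hβ' (log_cos_nonpos _))
  have hpair : ∀ k l, log (sin (x l - x k)) + log (sin (x k + x l)) ≤ 0 :=
    fun _ _ => add_nonpos (log_sin_nonpos _) (log_sin_nonpos _)
  calc lamBC N β β' x
      ≤ ∑ l ∈ Finset.Ioi i, (log (sin (x l - x i)) + log (sin (x i + x l))) := by
        have hrow := Finset.sum_le_of_nonpos (Finset.mem_univ i)
          (f := fun k => ∑ l ∈ Finset.Ioi k, (log (sin (x l - x k)) + log (sin (x k + x l))))
          fun k _ => Finset.sum_nonpos fun l _ => hpair k l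
        rw [lamBC_eq_sum_log_sin_rev_sub]
        linarith
    _ ≤ log (sin (x j - x i)) + log (sin (x i + x j)) :=
        Finset.sum_le_of_nonpos (Finset.mem_Ioi.2 hij) fun l _ => hpair i l
    _ ≤ log (sin (x j - x i)) := by linarith [log_sin_nonpos (x i + x j)]

lemma lamBC_le_single (hβ : 0 ≤ β) (hβ' : 0 ≤ β') (x : Fin N → ℝ) (i : Fin N) :
    lamBC N β β' x ≤ β * log (sin (x i)) + β' * log (cos (x i)) := by
  have hpairs : ∑ k, ∑ l ∈ Finset.Ioi k, (log (sin (x k - x l)) + log (sin (x k + x l))) ≤ 0 :=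
    Finset.sum_nonpos fun _ _ => Finset.sum_nonpos fun _ _ =>
      add_nonpos (log_sin_nonpos _) (log_sin_nonpos _)
  have hsingle := Finset.sum_le_of_nonpos (Finset.mem_univ i) fun k _ =>
    add_nonpos (mul_nonpos_of_nonneg_of_nonpos hβ (log_sin_nonpos (x k)))
      (mul_nonpos_of_nonneg_of_nonpos hβ' (log_cos_nonpos (x k)))
  rw [lamBC]
  linarith

lemma lamBC_le_mul_log_sin (hβ : 0 ≤ β) (hβ' : 0 ≤ β') (x : Fin N → ℝ) (i : Fin N) :
    lamBC N β β' x ≤ β * log (sin (x i)) := by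
  linarith [lamBC_le_single hβ hβ' x i, mul_nonpos_of_nonneg_of_nonpos hβ' (log_cos_nonpos (x i))]

lemma lamBC_le_mul_log_cos (hβ : 0 ≤ β) (hβ' : 0 ≤ β') (x : Fin N → ℝ) (i : Fin N) :
    lamBC N β β' x ≤ β' * log (cos (x i)) := by
  linarith [lamBC_le_single hβ hβ' x i, mul_nonpos_of_nonneg_of_nonpos hβ (log_sin_nonpos (x i))]

lemma differentiableAt_lamBC {x : Fin N → ℝ} (hx : x ∈ weylAlcove N) :
    DifferentiableAt ℝ (lamBC N β β') x := by
  rw [lamBC_eq_sum_log_sin_rev_sub]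
  refine .add (.fun_sum fun i _ => .fun_sum fun j hj => .add ?_ ?_)
    (.fun_sum fun i _ => .add (.const_mul ?_ _) (.const_mul ?_ _))
  · exact .log (by fun_prop)
      (sin_pos_of_mem_Ioo (WeylAlcove.sub_mem_Ioo hx (Finset.mem_Ioi.1 hj))).ne'
  · exact .log (by fun_prop) (sin_pos_of_mem_Ioo (WeylAlcove.add_mem_Ioo hx i j)).ne'
  · exact .log (by fun_prop) (WeylAlcove.sin_pos hx i).ne'
  · exact .log (by fun_prop) (WeylAlcove.cos_pos hx i).ne'

-- `(e :)` elaborates `e` before unifying with the goal; the other order is very slow.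
lemma concaveOn_log_sin_sub {i j : Fin N} (hij : i < j) :
    ConcaveOn ℝ (weylAlcove N) fun x => log (sin (x j - x i)) :=
  (concaveOn_log_sin_comp_linearMap (convex_weylAlcove N)
    (.proj (R := ℝ) (φ := fun _ : Fin N => ℝ) j - .proj i) fun _ hx =>
      WeylAlcove.sub_mem_Ioo hx hij :)

lemma concaveOn_log_sin_add (i j : Fin N) :
    ConcaveOn ℝ (weylAlcove N) fun x => log (sin (x i + x j)) :=
  (concaveOn_log_sin_comp_linearMap (convex_weylAlcove N)
    (.proj (R := ℝ) (φ := fun _ : Fin N => ℝ) i + .proj j) fun _ hx =>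
      WeylAlcove.add_mem_Ioo hx i j :)

lemma strictConcaveOn_lamBC (hβ : 0 < β) (hβ' : 0 < β') :
    StrictConcaveOn ℝ (weylAlcove N) (lamBC N β β') := by
  have hsingle : StrictConcaveOn ℝ (Ioo 0 (π / 2))
      fun t => β * log (sin t) + β' * log (cos t) :=
    ((strictConcaveOn_log_sin.subset (Ioo_subset_Ioo_right (by linarith [pi_pos]))
        (convex_Ioo _ _)).const_mul hβ).add
      ((strictConcaveOn_log_cos.subset (Ioo_subset_Ioo_left (by linarith [pi_pos]))
        (convex_Ioo _ _)).const_mul hβ')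
  rw [lamBC_eq_sum_log_sin_rev_sub]
  exact ConcaveOn.add_strictConcaveOn
    (.fun_sum _ (convex_weylAlcove N) fun i _ => .fun_sum _ (convex_weylAlcove N) fun j hj =>
      (concaveOn_log_sin_sub (Finset.mem_Ioi.1 hj)).add (concaveOn_log_sin_add i j))
    ((strictConcaveOn_sum_comp_apply hsingle).subset (weylAlcove_subset_pi N)
      (convex_weylAlcove N))

end LamBC

def shrunkWeylAlcove (N : ℕ) (δ : ℝ) : Set (Fin N → ℝ) :=
  {x | (∀ i, δ ≤ x i ∧ x i ≤ π / 2 - δ) ∧ ∀ i j, i < j → x i + δ ≤ x j}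

lemma shrunkWeylAlcove_subset {N : ℕ} {δ : ℝ} (hδ : 0 < δ) :
    shrunkWeylAlcove N δ ⊆ weylAlcove N := fun _ hx =>
  ⟨fun i j hij => by linarith [hx.2 i j hij],
    fun i => ⟨by linarith [(hx.1 i).1], by linarith [(hx.1 i).2]⟩⟩

lemma isCompact_shrunkWeylAlcove (N : ℕ) (δ : ℝ) : IsCompact (shrunkWeylAlcove N δ) := by
  refine (isCompact_univ_pi fun _ => isCompact_Icc (a := δ) (b := π / 2 - δ)).of_isClosed_subset
    ?_ fun x hx i _ => hx.1 i
  simp only [shrunkWeylAlcove, ofPred_and, ofPred_forall]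
  exact .inter (isClosed_iInter fun i => .inter (isClosed_le continuous_const (continuous_apply i))
      (isClosed_le (continuous_apply i) continuous_const))
    (isClosed_iInter fun i => isClosed_iInter fun j => isClosed_iInter fun _ =>
      isClosed_le (by fun_prop) (continuous_apply j))

lemma mem_shrunkWeylAlcove_of_le_lamBC {N : ℕ} {β β' m : ℝ} (hβ : 0 < β) (hβ' : 0 < β')
    {x : Fin N → ℝ} (hx : x ∈ weylAlcove N) (hm : m ≤ lamBC N β β' x) :
    x ∈ shrunkWeylAlcove N (min (exp m) (min (exp (m / β)) (exp (m / β')))) := by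
  refine ⟨fun i => ⟨?_, ?_⟩, fun i j hij => ?_⟩
  · calc _ ≤ exp (m / β) := (min_le_right _ _).trans (min_le_left _ _)
      _ ≤ sin (x i) := exp_div_le_of_le_mul_log hβ (WeylAlcove.sin_pos hx i)
          (hm.trans (lamBC_le_mul_log_sin hβ.le hβ'.le x i))
      _ ≤ x i := sin_le (WeylAlcove.pos hx i).le
  · have hcos : exp (m / β') ≤ cos (x i) := exp_div_le_of_le_mul_log hβ' (WeylAlcove.cos_pos hx i)
      (hm.trans (lamBC_le_mul_log_cos hβ.le hβ'.le x i))
    have : cos (x i) ≤ π / 2 - x i := by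
      rw [← sin_pi_div_two_sub]
      exact sin_le (by linarith [WeylAlcove.lt_pi_div_two hx i])
    linarith [(min_le_right (exp m) (min (exp (m / β)) (exp (m / β')))).trans (min_le_right _ _)]
  · have hsin : exp m ≤ sin (x j - x i) :=
      (le_log_iff_exp_le (sin_pos_of_mem_Ioo (WeylAlcove.sub_mem_Ioo hx hij))).1
        (hm.trans (lamBC_le_log_sin_sub hβ.le hβ'.le x hij))
    linarith [min_le_left (exp m) (min (exp (m / β)) (exp (m / β'))),
      sin_le (WeylAlcove.sub_mem_Ioo hx hij).1.le]

/-- `λ` attains its maximum on `C` at a unique point `ξ`, which is also the unique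
critical point of `λ` in `C`. -/
theorem lamBC_unique_max (N : ℕ) (β β' : ℝ) (hβ : 0 < β) (hβ' : 0 < β') :
    ∃ ξ ∈ weylAlcove N,
      IsMaxOn (lamBC N β β') (weylAlcove N) ξ ∧
      fderiv ℝ (lamBC N β β') ξ = 0 ∧
      ∀ y ∈ weylAlcove N,
        (IsMaxOn (lamBC N β β') (weylAlcove N) y ∨ fderiv ℝ (lamBC N β β') y = 0) →
          y = ξ := by
  have hconc := strictConcaveOn_lamBC (N := N) hβ hβ'
  obtain ⟨x₀, hx₀⟩ := weylAlcove_nonempty N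
  obtain ⟨ξ, hξ, hmax⟩ := exists_isMaxOn_of_superlevel_subset (isCompact_shrunkWeylAlcove N _)
    (shrunkWeylAlcove_subset (by positivity))
    (fun x hx => (differentiableAt_lamBC hx).continuousAt.continuousWithinAt) hx₀
    fun x hx => mem_shrunkWeylAlcove_of_le_lamBC hβ hβ' hx
  refine ⟨ξ, hξ, hmax, (hmax.isLocalMax ((isOpen_weylAlcove N).mem_nhds hξ)).fderiv_eq_zero, ?_⟩
  rintro y hy (hy_max | hy_crit)
  · exact hconc.eq_of_isMaxOn hy_max hmax hy hξ
  · exact hconc.eq_of_isMaxOn (hconc.concaveOn.isMaxOn_of_fderiv_eq_zero hy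
      (differentiableAt_lamBC hy) hy_crit) hmax hy hξ
end

section
/- For N = 3, the unique solution ξ₁ < ξ₂ < ξ₃ of the cyclic system ξ_i = 1/(ξ_i − ξ_{i−1}) + 1/(ξ_i − ξ_{i+1}) has elementary symmetric polynomial data such that the monic polynomial p₃(t) = (t−ξ₁)(t−ξ₂)(t−ξ₃) equals t³ − (3/2)t. -/
/-- For `N = 3`, any ordered solution `ξ₁ < ξ₂ < ξ₃` of the cyclic system
`ξ_i = 1/(ξ_i − ξ_{i−1}) + 1/(ξ_i − ξ_{i+1})` has
`(t−ξ₁)(t−ξ₂)(t−ξ₃) = t³ − (3/2)t`. -/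
theorem p3_eq (a b c : ℝ) (h1 : a < b) (h2 : b < c)
    (ea : a = (a - c)⁻¹ + (a - b)⁻¹)
    (eb : b = (b - a)⁻¹ + (b - c)⁻¹)
    (ec : c = (c - b)⁻¹ + (c - a)⁻¹) :
    ∀ t : ℝ, (t - a) * (t - b) * (t - c) = t ^ 3 - (3 / 2) * t := by
  have hab : a - b ≠ 0 := sub_ne_zero.mpr h1.ne
  have hbc : b - c ≠ 0 := sub_ne_zero.mpr h2.ne
  have hac : a - c ≠ 0 := sub_ne_zero.mpr (h1.trans h2).ne
  have k1 : (a - b)⁻¹ + (b - a)⁻¹ = 0 := by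
    rw [show b - a = -(a - b) by ring, inv_neg]; ring
  have k2 : (b - c)⁻¹ + (c - b)⁻¹ = 0 := by
    rw [show c - b = -(b - c) by ring, inv_neg]; ring
  have k3 : (a - c)⁻¹ + (c - a)⁻¹ = 0 := by
    rw [show c - a = -(a - c) by ring, inv_neg]; ring
  have hs : a + b + c = 0 := by linarith [ea, eb, ec, k1, k2, k3]
  have m1 : a * (a - b)⁻¹ + b * (b - a)⁻¹ = 1 := by
    rw [show b - a = -(a - b) by ring, inv_neg]
    field_simp
    ring
  have m2 : b * (b - c)⁻¹ + c * (c - b)⁻¹ = 1 := by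
    rw [show c - b = -(b - c) by ring, inv_neg]
    field_simp
    ring
  have m3 : a * (a - c)⁻¹ + c * (c - a)⁻¹ = 1 := by
    rw [show c - a = -(a - c) by ring, inv_neg]
    field_simp
    ring
  have hsum : a ^ 2 + b ^ 2 + c ^ 2 = 3 := by
    linear_combination a * ea + b * eb + c * ec + m1 + m2 + m3
  have pa : a * ((a - c) * (a - b)) = (a - b) + (a - c) := by
    calc a * ((a - c) * (a - b)) = ((a - c)⁻¹ + (a - b)⁻¹) * ((a - c) * (a - b)) := by
          rw [← ea]
      _ = (a - b) + (a - c) := by field_simp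
  have pb : b * ((b - a) * (b - c)) = (b - c) + (b - a) := by
    have hba : b - a ≠ 0 := sub_ne_zero.mpr h1.ne'
    calc b * ((b - a) * (b - c)) = ((b - a)⁻¹ + (b - c)⁻¹) * ((b - a) * (b - c)) := by
          rw [← eb]
      _ = (b - c) + (b - a) := by field_simp
  have pc : c * ((c - b) * (c - a)) = (c - a) + (c - b) := by
    have hcb : c - b ≠ 0 := sub_ne_zero.mpr h2.ne'
    have hca : c - a ≠ 0 := sub_ne_zero.mpr (h1.trans h2).ne'
    calc c * ((c - b) * (c - a)) = ((c - b)⁻¹ + (c - a)⁻¹) * ((c - b) * (c - a)) := by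
          rw [← ec]
      _ = (c - a) + (c - b) := by field_simp
  have habc : a * b * c = 0 := by
    linear_combination (1/9) * (pa + pb + pc)
      - ((a^2 + b^2 + c^2 - 2*a*b - 2*b*c - 2*a*c)/9) * hs
  intro t
  linear_combination (-t^2 + t*(a+b+c)/2) * hs - (t/2) * hsum - habc
end

section
/- Let X₀ = Σ_i (1/(z_i − z_{i+1}))(∂_i − ∂_{i+1}) with cyclic indices on N variables, and let σ_k = Σ_i z_i^k. Then X₀σ₁ = 0, X₀σ₂ = 2N, and X₀σ₃ = 6σ₁; consequently for any polynomial f(σ₁,σ₂,σ₃), X₀f = 2(N f_{σ₂} + 3σ₁ f_{σ₃}), so X₀ maps ℂ[σ₁,σ₂,σ₃] ∩ (polynomials of degree ≤ n in z) into itself. -/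
/-- The vector field `X₀ = Σ_i (1/(z_i − z_{i+1}))(∂_i − ∂_{i+1})` (cyclic indices). -/
noncomputable def X0 (N : ℕ) [NeZero N] (F : (Fin N → ℝ) → ℝ) (z : Fin N → ℝ) : ℝ :=
  ∑ i, (z i - z (i + 1))⁻¹ *
    (fderiv ℝ F z (Pi.single i 1) - fderiv ℝ F z (Pi.single (i + 1) 1))

/-- The power sum `σ_k = Σ_i z_i^k`. -/
def sigmaP (N : ℕ) (k : ℕ) (z : Fin N → ℝ) : ℝ := ∑ i, z i ^ k


open ContinuousLinearMap in
lemma pow_hasFDerivAt {N : ℕ} (i : Fin N) (k : ℕ) (z : Fin N → ℝ) :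
    HasFDerivAt (fun w : Fin N → ℝ => w i ^ k)
      ((((k : ℝ) * z i ^ (k - 1)) • ContinuousLinearMap.proj i : (Fin N → ℝ) →L[ℝ] ℝ)) z :=
  (hasDerivAt_pow k (z i)).comp_hasFDerivAt z (hasFDerivAt_apply (𝕜 := ℝ) i z)

noncomputable def sigD (N : ℕ) (k : ℕ) (z : Fin N → ℝ) : (Fin N → ℝ) →L[ℝ] ℝ :=
  ∑ i, (((k : ℝ) * z i ^ (k - 1)) • ContinuousLinearMap.proj i : (Fin N → ℝ) →L[ℝ] ℝ)

lemma sigma_hasFDerivAt (N k : ℕ) (z : Fin N → ℝ) :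
    HasFDerivAt (sigmaP N k) (sigD N k z) z :=
  HasFDerivAt.fun_sum (fun i _ => pow_hasFDerivAt i k z)

lemma sigD_single (N k : ℕ) (z : Fin N → ℝ) (j : Fin N) :
    sigD N k z (Pi.single j 1) = k * z j ^ (k - 1) := by
  simp [sigD, ContinuousLinearMap.sum_apply, Pi.single_apply, mul_ite,
    Finset.sum_ite_eq']

lemma fderiv_sigma (N k : ℕ) (z : Fin N → ℝ) (j : Fin N) :
    fderiv ℝ (sigmaP N k) z (Pi.single j 1) = k * z j ^ (k - 1) := by
  rw [(sigma_hasFDerivAt N k z).fderiv]; exact sigD_single N k z j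

lemma sum_shift {N : ℕ} [NeZero N] (z : Fin N → ℝ) : ∑ i, z (i + 1) = ∑ i, z i :=
  Fintype.sum_equiv (Equiv.addRight 1) _ _ (fun i => rfl)

lemma X0_sigma (N : ℕ) [NeZero N] (k : ℕ) (z : Fin N → ℝ) :
    X0 N (sigmaP N k) z
      = ∑ i, (z i - z (i + 1))⁻¹ * (k * z i ^ (k - 1) - k * z (i + 1) ^ (k - 1)) := by
  unfold X0
  simp only [fderiv_sigma]

lemma X0_sigma1 (N : ℕ) [NeZero N] (z : Fin N → ℝ) : X0 N (sigmaP N 1) z = 0 := by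
  rw [X0_sigma]; simp

lemma X0_sigma2 (N : ℕ) [NeZero N] (z : Fin N → ℝ) (hz : ∀ i : Fin N, z i ≠ z (i + 1)) :
    X0 N (sigmaP N 2) z = 2 * N := by
  rw [X0_sigma]
  have : ∀ i : Fin N, (z i - z (i + 1))⁻¹ *
      ((2:ℕ) * z i ^ (2 - 1) - (2:ℕ) * z (i + 1) ^ (2 - 1)) = 2 := by
    intro i
    have h : z i - z (i + 1) ≠ 0 := sub_ne_zero.mpr (hz i)
    field_simp
    ring
  rw [Finset.sum_congr rfl (fun i _ => this i)]
  simp [Finset.card_univ, mul_comm]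

lemma X0_sigma3 (N : ℕ) [NeZero N] (z : Fin N → ℝ) (hz : ∀ i : Fin N, z i ≠ z (i + 1)) :
    X0 N (sigmaP N 3) z = 6 * sigmaP N 1 z := by
  rw [X0_sigma]
  have : ∀ i : Fin N, (z i - z (i + 1))⁻¹ *
      ((3:ℕ) * z i ^ (3 - 1) - (3:ℕ) * z (i + 1) ^ (3 - 1))
      = 3 * z i + 3 * z (i + 1) := by
    intro i
    have h : z i - z (i + 1) ≠ 0 := sub_ne_zero.mpr (hz i)
    field_simp
    ring
  rw [Finset.sum_congr rfl (fun i _ => this i), Finset.sum_add_distrib]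
  rw [← Finset.mul_sum, ← Finset.mul_sum, sum_shift]
  unfold sigmaP
  simp only [pow_one]
  ring

lemma X0_comp (N : ℕ) [NeZero N] (z : Fin N → ℝ) (hz : ∀ i : Fin N, z i ≠ z (i + 1))
    (g : (Fin 3 → ℝ) → ℝ)
    (hg : DifferentiableAt ℝ g (fun t : Fin 3 => sigmaP N ((t : ℕ) + 1) z)) :
    X0 N (fun w => g (fun t : Fin 3 => sigmaP N ((t : ℕ) + 1) w)) z
      = 2 * ((N : ℝ) * fderiv ℝ g (fun t : Fin 3 => sigmaP N ((t : ℕ) + 1) z)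
                (Pi.single (1 : Fin 3) 1)
          + 3 * sigmaP N 1 z * fderiv ℝ g (fun t : Fin 3 => sigmaP N ((t : ℕ) + 1) z)
                (Pi.single (2 : Fin 3) 1)) := by
  set S : (Fin N → ℝ) → (Fin 3 → ℝ) := fun w t => sigmaP N ((t : ℕ) + 1) w with hS
  set L : (Fin N → ℝ) →L[ℝ] (Fin 3 → ℝ) :=
    ContinuousLinearMap.pi (fun t : Fin 3 => sigD N ((t : ℕ) + 1) z) with hL
  have hSd : HasFDerivAt S L z :=
    hasFDerivAt_pi.2 (fun t => sigma_hasFDerivAt N ((t : ℕ) + 1) z)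
  have hcomp : HasFDerivAt (fun w => g (S w)) ((fderiv ℝ g (S z)).comp L) z :=
    hg.hasFDerivAt.comp z hSd
  have hfd : fderiv ℝ (fun w => g (S w)) z = (fderiv ℝ g (S z)).comp L := hcomp.fderiv
  have hLe : ∀ j : Fin N, L (Pi.single j 1)
      = fun t : Fin 3 => (((t : ℕ) + 1 : ℕ) : ℝ) * z j ^ (t : ℕ) := by
    intro j
    funext t
    show sigD N ((t : ℕ) + 1) z (Pi.single j 1) = _
    rw [sigD_single]
    simp
  set A := fderiv ℝ g (S z) (Pi.single (1 : Fin 3) 1) with hA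
  set B := fderiv ℝ g (S z) (Pi.single (2 : Fin 3) 1) with hB
  have hterm : ∀ i : Fin N,
      (z i - z (i + 1))⁻¹ *
        (fderiv ℝ (fun w => g (S w)) z (Pi.single i 1)
          - fderiv ℝ (fun w => g (S w)) z (Pi.single (i + 1) 1))
      = 2 * A + 3 * (z i + z (i + 1)) * B := by
    intro i
    rw [hfd]
    have hv : L (Pi.single i 1) - L (Pi.single (i + 1) 1)
        = (2 * (z i - z (i + 1))) • (Pi.single (1 : Fin 3) 1 : Fin 3 → ℝ)
          + (3 * (z i ^ 2 - z (i + 1) ^ 2)) • (Pi.single (2 : Fin 3) 1 : Fin 3 → ℝ) := by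
      rw [hLe, hLe]
      funext t
      fin_cases t <;> simp [Pi.single_apply] <;> ring
    have : fderiv ℝ g (S z) (L (Pi.single i 1)) - fderiv ℝ g (S z) (L (Pi.single (i + 1) 1))
        = 2 * (z i - z (i + 1)) * A + 3 * (z i ^ 2 - z (i + 1) ^ 2) * B := by
      rw [← map_sub, hv, map_add, map_smul, map_smul, hA, hB]
      simp [smul_eq_mul]
    simp only [ContinuousLinearMap.comp_apply] at *
    rw [this]
    have h : z i - z (i + 1) ≠ 0 := sub_ne_zero.mpr (hz i)
    field_simp
    ring
  unfold X0
  rw [Finset.sum_congr rfl (fun i _ => hterm i)]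
  rw [Finset.sum_add_distrib, Finset.sum_const, Finset.card_univ, Fintype.card_fin]
  have : ∑ i : Fin N, 3 * (z i + z (i + 1)) * B
      = 3 * (sigmaP N 1 z + sigmaP N 1 z) * B := by
    rw [← Finset.sum_mul, ← Finset.mul_sum, Finset.sum_add_distrib, sum_shift]
    unfold sigmaP
    simp [pow_one]
  rw [this]
  push_cast
  ring

open MvPolynomial in
noncomputable def evalD (p : MvPolynomial (Fin 3) ℝ) (w : Fin 3 → ℝ) : (Fin 3 → ℝ) →L[ℝ] ℝ :=
  ∑ j, ((eval w (pderiv j p)) • ContinuousLinearMap.proj j : (Fin 3 → ℝ) →L[ℝ] ℝ)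

open MvPolynomial in
lemma eval_hasFDerivAt (p : MvPolynomial (Fin 3) ℝ) (w : Fin 3 → ℝ) :
    HasFDerivAt (fun v : Fin 3 → ℝ => eval v p) (evalD p w) w := by
  induction p using MvPolynomial.induction_on with
  | C a =>
      have h : evalD (C a) w = 0 := by simp [evalD]
      simp only [eval_C, h]
      exact hasFDerivAt_const a w
  | add p q hp hq =>
      have h : evalD (p + q) w = evalD p w + evalD q w := by
        simp [evalD, add_smul, Finset.sum_add_distrib]
      simp only [map_add, h]
      exact hp.add hq
  | mul_X p i hp =>
      have hXi : HasFDerivAt (fun v : Fin 3 → ℝ => v i)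
          (ContinuousLinearMap.proj i : (Fin 3 → ℝ) →L[ℝ] ℝ) w :=
        hasFDerivAt_apply (𝕜 := ℝ) i w
      have h := hp.mul hXi
      have he : evalD (p * X i) w
          = (eval w p) • (ContinuousLinearMap.proj i : (Fin 3 → ℝ) →L[ℝ] ℝ)
            + w i • evalD p w := by
        simp only [evalD, pderiv_mul, map_add, map_mul, eval_X, add_smul,
          Finset.sum_add_distrib, Finset.smul_sum, smul_smul]
        rw [add_comm]
        congr 1
        · rw [Finset.sum_eq_single i]
          · simp
          · intro b _ hb
            rw [pderiv_X_of_ne (Ne.symm hb)]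
            simp
          · simp
        · apply Finset.sum_congr rfl
          intro j _
          rw [mul_comm]
      rw [he]
      simp only [map_mul, eval_X]
      exact h

open MvPolynomial in
lemma fderiv_eval (p : MvPolynomial (Fin 3) ℝ) (w : Fin 3 → ℝ) (j : Fin 3) :
    fderiv ℝ (fun v : Fin 3 → ℝ => eval v p) w (Pi.single j 1) = eval w (pderiv j p) := by
  rw [(eval_hasFDerivAt p w).fderiv]
  simp [evalD, ContinuousLinearMap.sum_apply, Pi.single_apply, mul_ite,
    Finset.sum_ite_eq']

open MvPolynomial in
lemma mem_support_pderiv {p : MvPolynomial (Fin 3) ℝ} {i : Fin 3} {e : Fin 3 →₀ ℕ}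
    (he : e ∈ (pderiv i p).support) :
    ∃ d ∈ p.support, d i ≠ 0 ∧ e = d - Finsupp.single i 1 := by
  classical
  have hrep : pderiv i p
      = ∑ d ∈ p.support, monomial (d - Finsupp.single i 1) (coeff d p * (d i : ℝ)) := by
    conv_lhs => rw [p.as_sum, map_sum]
    exact Finset.sum_congr rfl fun d _ => pderiv_monomial
  rw [hrep] at he
  obtain ⟨d, hd, hmem⟩ := Finset.mem_biUnion.1 (support_sum he)
  rw [support_monomial] at hmem
  by_cases hc : coeff d p * (d i : ℝ) = 0
  · rw [if_pos hc] at hmem; exact absurd hmem (Finset.notMem_empty e)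
  · rw [if_neg hc] at hmem
    refine ⟨d, hd, ?_, Finset.mem_singleton.1 hmem⟩
    intro h0
    exact hc (by simp [h0])

lemma weight_sub_single {w' : Fin 3 → ℕ} {d : Fin 3 →₀ ℕ} {i : Fin 3} (hd : d i ≠ 0) :
    Finsupp.weight w' (d - Finsupp.single i 1) + w' i = Finsupp.weight w' d := by
  have h1 : Finsupp.single i 1 ≤ d := by
    rw [Finsupp.single_le_iff]; omega
  have hw : Finsupp.weight w' (Finsupp.single i 1) = w' i := by
    simp [Finsupp.weight_apply, Finsupp.sum_single_index]
  conv_rhs => rw [← tsub_add_cancel_of_le h1]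
  rw [map_add, hw]

open MvPolynomial in
lemma deg_q (p : MvPolynomial (Fin 3) ℝ) (c₁ c₂ : ℝ) :
    weightedTotalDegree (![1, 2, 3] : Fin 3 → ℕ)
        (C c₁ * pderiv 1 p + C c₂ * (X 0 * pderiv 2 p))
      ≤ weightedTotalDegree (![1, 2, 3] : Fin 3 → ℕ) p := by
  classical
  set w' : Fin 3 → ℕ := ![1, 2, 3]
  set D := weightedTotalDegree w' p
  apply Finset.sup_le
  intro d hd
  have hd' := MvPolynomial.support_add hd
  rcases Finset.mem_union.1 hd' with h | h
  · -- d in support of C c₁ * pderiv 1 p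
    have hdp : d ∈ (pderiv (1 : Fin 3) p).support := by
      rw [mem_support_iff] at h ⊢
      intro h0
      exact h (by rw [coeff_C_mul, h0, mul_zero])
    obtain ⟨e, he, hei, rfl⟩ := mem_support_pderiv hdp
    have := le_weightedTotalDegree w' he
    have hws := weight_sub_single (w' := w') (i := (1 : Fin 3)) hei
    omega
  · -- d in support of C c₂ * (X 0 * pderiv 2 p)
    have hdp : d ∈ (X (0 : Fin 3) * pderiv (2 : Fin 3) p).support := by
      rw [mem_support_iff] at h ⊢
      intro h0
      exact h (by rw [coeff_C_mul, h0, mul_zero])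
    have hsub := MvPolynomial.support_mul _ _ hdp
    rw [Finset.mem_add] at hsub
    obtain ⟨a, ha, e, he, rfl⟩ := hsub
    rw [support_X] at ha
    rw [Finset.mem_singleton] at ha
    subst ha
    obtain ⟨f, hf, hfi, rfl⟩ := mem_support_pderiv he
    have := le_weightedTotalDegree w' hf
    have hws := weight_sub_single (w' := w') (i := (2 : Fin 3)) hfi
    have hw0 : Finsupp.weight w' (Finsupp.single (0 : Fin 3) 1) = w' 0 := by
      simp [Finsupp.weight_apply, Finsupp.sum_single_index]
    rw [map_add, hw0]
    have h0 : w' 0 = 1 := rfl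
    have h2 : w' 2 = 3 := rfl
    omega

open MvPolynomial in
/-- `X₀σ₁ = 0`, `X₀σ₂ = 2N`, `X₀σ₃ = 6σ₁`; consequently for any (smooth) function
`g(σ₁,σ₂,σ₃)` one has `X₀(g∘σ) = 2(N ∂g/∂σ₂ + 3σ₁ ∂g/∂σ₃)`, and `X₀` maps
polynomials in `σ₁,σ₂,σ₃` of degree `≤ n` in `z` (weighted degree `≤ n`) into
themselves. -/
theorem X0_invariance (N : ℕ) [NeZero N] (z : Fin N → ℝ)
    (hz : ∀ i : Fin N, z i ≠ z (i + 1)) :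
    X0 N (sigmaP N 1) z = 0 ∧
    X0 N (sigmaP N 2) z = 2 * N ∧
    X0 N (sigmaP N 3) z = 6 * sigmaP N 1 z ∧
    (∀ g : (Fin 3 → ℝ) → ℝ, ContDiff ℝ (⊤ : ℕ∞) g →
      X0 N (fun w => g ![sigmaP N 1 w, sigmaP N 2 w, sigmaP N 3 w]) z
        = 2 * ((N : ℝ) * fderiv ℝ g ![sigmaP N 1 z, sigmaP N 2 z, sigmaP N 3 z]
                  (Pi.single (1 : Fin 3) 1)
            + 3 * sigmaP N 1 z * fderiv ℝ g ![sigmaP N 1 z, sigmaP N 2 z, sigmaP N 3 z]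
                  (Pi.single (2 : Fin 3) 1))) ∧
    (∀ p : MvPolynomial (Fin 3) ℝ, ∃ q : MvPolynomial (Fin 3) ℝ,
      MvPolynomial.weightedTotalDegree (![1, 2, 3] : Fin 3 → ℕ) q
          ≤ MvPolynomial.weightedTotalDegree (![1, 2, 3] : Fin 3 → ℕ) p ∧
      ∀ w : Fin N → ℝ, (∀ i : Fin N, w i ≠ w (i + 1)) →
        X0 N (fun v => MvPolynomial.eval
            (fun t : Fin 3 => sigmaP N ((t : ℕ) + 1) v) p) w
          = MvPolynomial.eval (fun t : Fin 3 => sigmaP N ((t : ℕ) + 1) w) q) := by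
  have hvec : ∀ w : Fin N → ℝ,
      (![sigmaP N 1 w, sigmaP N 2 w, sigmaP N 3 w] : Fin 3 → ℝ)
        = fun t : Fin 3 => sigmaP N ((t : ℕ) + 1) w := by
    intro w
    funext t
    fin_cases t <;> rfl
  refine ⟨X0_sigma1 N z, X0_sigma2 N z hz, X0_sigma3 N z hz, ?_, ?_⟩
  · intro g hg
    simp only [hvec]
    exact X0_comp N z hz g (hg.differentiable (by simp)).differentiableAt
  · intro p
    refine ⟨C (2 * (N : ℝ)) * pderiv 1 p + C 6 * (X 0 * pderiv 2 p), deg_q p _ _, ?_⟩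
    intro w hw
    have hdiff : DifferentiableAt ℝ (fun v : Fin 3 → ℝ => eval v p)
        (fun t : Fin 3 => sigmaP N ((t : ℕ) + 1) w) :=
      (eval_hasFDerivAt p _).differentiableAt
    have h1 := X0_comp N w hw (fun v : Fin 3 → ℝ => eval v p) hdiff
    rw [fderiv_eval, fderiv_eval] at h1
    have h0 : (fun t : Fin 3 => sigmaP N ((t : ℕ) + 1) w) 0 = sigmaP N 1 w := rfl
    rw [h1]
    simp only [map_add, map_mul, eval_C, eval_X, h0]
    ring
end
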